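/- For every ∂_F-delta operator Q there exists a uniquely determined ∂_F-basic polynomial sequence of Q, i.e. a unique sequence (q_n)_{n≥0} in K[x] with deg q_n = n, q_0 = 1, q_n(0) = 0 for n ≥ 1, and Q q_n = F_n q_{n-1} for all n ≥ 1. -/
import Mathlib


open Polynomial Finset

/-- F-factorial: `Ffact n = F_n · F_{n-1} ··· F_1`, with `Ffact 0 = 1`. -/
def Ffact (n : ℕ) : ℕ := ∏ i ∈ Finset.range n, Nat.fib (i + 1)

/-- Fibonomial coefficient `C_F(n,k) = F_n!/(F_k!·F_{n−k}!)`, taken in a field `K`. -/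
noncomputable def fibnom (K : Type*) [Field K] (n k : ℕ) : K :=
  (Ffact n : K) / ((Ffact k : K) * (Ffact (n - k) : K))

variable (K : Type*) [Field K] [CharZero K]

/-- The F-derivative `∂_F`, the linear operator with `∂_F x^n = F_n x^{n-1}`. -/
noncomputable def fderivF : Module.End K (Polynomial K) :=
  Polynomial.lsum fun n => (Nat.fib n : K) • (Polynomial.monomial (n - 1) : K →ₗ[K] Polynomial K)

/-- The F-translation operator `E^y(∂_F) = Σ_{k≥0} (y^k/F_k!) ∂_F^k`; since `∂_F`
strictly decreases degree, the sum truncated at `natDegree p + 1` is the full sum. -/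
noncomputable def Etrans (y : K) (p : Polynomial K) : Polynomial K :=
  ∑ k ∈ Finset.range (p.natDegree + 1), (y ^ k / (Ffact k : K)) • ((fderivF K ^ k) p)

/-- A linear operator on `K[x]` is `∂_F`-shift invariant iff it commutes with every
F-translation operator `E^y(∂_F)`. -/
def ShiftInv (T : Module.End K (Polynomial K)) : Prop :=
  ∀ (y : K) (p : Polynomial K), T (Etrans K y p) = Etrans K y (T p)

/-- A `∂_F`-delta operator: a `∂_F`-shift invariant operator `Q` with `Q x` a nonzero
constant. -/
def DeltaOp (Q : Module.End K (Polynomial K)) : Prop :=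
  ShiftInv K Q ∧ ∃ c : K, c ≠ 0 ∧ Q Polynomial.X = Polynomial.C c

/-- `(q_n)` is the `∂_F`-basic polynomial sequence of `Q`. -/
def BasicSeq (Q : Module.End K (Polynomial K)) (q : ℕ → Polynomial K) : Prop :=
  (∀ n : ℕ, (q n).degree = n) ∧ q 0 = 1 ∧ (∀ n : ℕ, 1 ≤ n → (q n).eval 0 = 0) ∧
    ∀ n : ℕ, 1 ≤ n → Q (q n) = (Nat.fib n : K) • q (n - 1)

/-- The operator `x̂_F`, with `x̂_F x^n = ((n+1)/F_{n+1}) x^{n+1}`. -/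
noncomputable def xF : Module.End K (Polynomial K) :=
  Polynomial.lsum fun n =>
    (((n : K) + 1) / (Nat.fib (n + 1) : K)) • (Polynomial.monomial (n + 1) : K →ₗ[K] Polynomial K)

/-- The Graves–Pincherle F-derivative `T' = T∘x̂_F − x̂_F∘T`. -/
noncomputable def GPderiv (T : Module.End K (Polynomial K)) : Module.End K (Polynomial K) :=
  T * xF K - xF K * T

/-- `T = Σ_{k≥0} (a_k/F_k!) Q^k`, expressed via truncations: since a delta operator `Q`
strictly decreases degree, `Q^k p = 0` for `k > natDegree p`, so the truncated sums agree. -/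
def OpSumRep (Q : Module.End K (Polynomial K)) (a : ℕ → K) (T : Module.End K (Polynomial K)) : Prop :=
  ∀ (p : Polynomial K) (N : ℕ), p.natDegree < N →
    T p = ∑ k ∈ Finset.range N, (a k / (Ffact k : K)) • ((Q ^ k) p)

/-- `(s_n)` is a sequence of Sheffer F-polynomials of `Q`. -/
def ShefferSeq (Q : Module.End K (Polynomial K)) (s : ℕ → Polynomial K) : Prop :=
  (∀ n : ℕ, (s n).degree = n) ∧ (∃ c : K, c ≠ 0 ∧ s 0 = Polynomial.C c) ∧
    ∀ n : ℕ, 1 ≤ n → Q (s n) = (Nat.fib n : K) • s (n - 1)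

section AuxLemmas

variable {K}

lemma fibK_ne_zero {n : ℕ} (hn : 1 ≤ n) : (Nat.fib n : K) ≠ 0 :=
  Nat.cast_ne_zero.mpr (Nat.fib_pos.mpr hn).ne'

lemma fderivF_monomial (n : ℕ) (a : K) :
    fderivF K (monomial n a) = (Nat.fib n : K) • monomial (n - 1) a := by
  rw [fderivF, Polynomial.lsum_apply, Polynomial.sum_monomial_index]
  · rfl
  · simp

lemma coeff_fderivF (p : Polynomial K) (j : ℕ) :
    (fderivF K p).coeff j = (Nat.fib (j + 1) : K) * p.coeff (j + 1) := by
  induction p using Polynomial.induction_on' with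
  | add p q hp hq => simp [hp, hq, mul_add]
  | monomial n a =>
    rw [fderivF_monomial]
    simp only [coeff_smul, coeff_monomial, smul_eq_mul]
    rcases n with _ | m
    · simp
    · simp only [Nat.succ_sub_one]
      by_cases h : m = j
      · subst h; simp
      · rw [if_neg h, if_neg (by omega), mul_zero, mul_zero]

lemma fderivF_eq_zero (p : Polynomial K) (h : p.natDegree = 0) : fderivF K p = 0 := by
  ext j
  rw [coeff_fderivF, Polynomial.coeff_eq_zero_of_natDegree_lt (by omega), mul_zero, coeff_zero]

lemma coeff_fderivF_eq_zero (p : Polynomial K) (j : ℕ) (h : p.natDegree ≤ j) :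
    (fderivF K p).coeff j = 0 := by
  rw [coeff_fderivF, Polynomial.coeff_eq_zero_of_natDegree_lt (by omega), mul_zero]

lemma natDegree_fderivF_le (p : Polynomial K) : (fderivF K p).natDegree ≤ p.natDegree - 1 := by
  rw [Polynomial.natDegree_le_iff_coeff_eq_zero]
  intro m hm
  exact coeff_fderivF_eq_zero p m (by omega)

lemma fderivF_pow_eq_zero (k : ℕ) (p : Polynomial K) (h : p.natDegree < k) :
    (fderivF K ^ k) p = 0 := by
  induction k generalizing p with
  | zero => omega
  | succ k ih =>
    rw [pow_succ, Module.End.mul_apply]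
    by_cases h0 : p.natDegree = 0
    · rw [fderivF_eq_zero p h0, map_zero]
    · exact ih _ (by have := natDegree_fderivF_le (K := K) p; omega)

lemma Etrans_eq_sum (y : K) (p : Polynomial K) (N : ℕ) (hN : p.natDegree < N) :
    Etrans K y p = ∑ k ∈ Finset.range N, (y ^ k / (Ffact k : K)) • ((fderivF K ^ k) p) := by
  rw [Etrans]
  apply Finset.sum_subset
  · intro k hk; simp only [Finset.mem_range] at *; omega
  · intro k _ hk
    simp only [Finset.mem_range, not_lt] at hk
    rw [fderivF_pow_eq_zero k p (by omega), smul_zero]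

lemma sum_smul_ext {N : ℕ} (A B : ℕ → Polynomial K)
    (h : ∀ y : K, ∑ k ∈ Finset.range N, y ^ k • A k = ∑ k ∈ Finset.range N, y ^ k • B k) :
    ∀ k, k < N → A k = B k := by
  intro k hk
  ext m
  have comm : ∀ (f : ℕ → K) (y : K),
      ∑ j ∈ Finset.range N, f j * y ^ j = ∑ j ∈ Finset.range N, y ^ j * f j :=
    fun f y => Finset.sum_congr rfl fun j _ => mul_comm _ _
  have key : ∀ y : K,
      Polynomial.eval y (∑ j ∈ Finset.range N,
        Polynomial.C ((A j).coeff m - (B j).coeff m) * Polynomial.X ^ j) = 0 := by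
    intro y
    have h2 := congrArg (fun q : Polynomial K => q.coeff m) (h y)
    simp only [Polynomial.finset_sum_coeff, Polynomial.coeff_smul, smul_eq_mul] at h2
    rw [Polynomial.eval_finset_sum]
    simp only [Polynomial.eval_mul, Polynomial.eval_C, Polynomial.eval_pow, Polynomial.eval_X,
      sub_mul]
    rw [Finset.sum_sub_distrib, sub_eq_zero, comm, comm, h2]
  have hP : (∑ j ∈ Finset.range N,
      Polynomial.C ((A j).coeff m - (B j).coeff m) * Polynomial.X ^ j) = 0 :=
    Polynomial.funext fun y => by rw [key y, Polynomial.eval_zero]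
  have h3 := congrArg (fun q : Polynomial K => q.coeff k) hP
  simp only [Polynomial.finset_sum_coeff, Polynomial.coeff_C_mul, Polynomial.coeff_X_pow,
    Polynomial.coeff_zero, mul_ite, mul_one, mul_zero] at h3
  rw [Finset.sum_ite_eq (Finset.range N) k
    (fun j => (A j).coeff m - (B j).coeff m), if_pos (Finset.mem_range.mpr hk)] at h3
  exact sub_eq_zero.mp h3

lemma Ffact_one : Ffact 1 = 1 := by decide
lemma Ffact_zero : Ffact 0 = 1 := by decide

lemma fderivF_X : fderivF K Polynomial.X = 1 := by
  rw [← Polynomial.monomial_one_one_eq_X, fderivF_monomial]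
  simp

lemma Q_one_eq_zero (Q : Module.End K (Polynomial K)) (hQ : DeltaOp K Q) : Q 1 = 0 := by
  obtain ⟨hS, c, hc, hX⟩ := hQ
  have hEX : Etrans K (1 : K) Polynomial.X = Polynomial.X + 1 := by
    rw [Etrans, Polynomial.natDegree_X]
    rw [Finset.sum_range_succ, Finset.sum_range_one]
    simp [Ffact_zero, Ffact_one, fderivF_X]
  have hEC : Etrans K (1 : K) (Polynomial.C c) = Polynomial.C c := by
    rw [Etrans, Polynomial.natDegree_C, Finset.sum_range_one]
    simp [Ffact_zero]
  have h := hS 1 Polynomial.X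
  rw [hEX, hX, hEC, map_add, hX] at h
  -- h : C c + Q 1 = C c
  nth_rewrite 2 [← add_zero (Polynomial.C c)] at h
  exact add_left_cancel h

lemma Q_C_eq_zero (Q : Module.End K (Polynomial K)) (hQ : DeltaOp K Q) (a : K) :
    Q (Polynomial.C a) = 0 := by
  have h : (Polynomial.C a : Polynomial K) = a • 1 := by
    rw [Polynomial.smul_eq_C_mul, mul_one]
  rw [h, map_smul, Q_one_eq_zero Q hQ, smul_zero]

lemma Q_comm_fderivF (Q : Module.End K (Polynomial K)) (hQ : DeltaOp K Q) (p : Polynomial K) :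
    Q (fderivF K p) = fderivF K (Q p) := by
  set N := max p.natDegree (Q p).natDegree + 2 with hN
  have key : ∀ k, k < N →
      ((Ffact k : K))⁻¹ • Q ((fderivF K ^ k) p) = ((Ffact k : K))⁻¹ • ((fderivF K ^ k) (Q p)) := by
    apply sum_smul_ext
    intro y
    have h := hQ.1 y p
    rw [Etrans_eq_sum y p N (by omega), Etrans_eq_sum y (Q p) N (by omega), map_sum] at h
    simp only [map_smul] at h
    calc ∑ k ∈ Finset.range N, y ^ k • ((Ffact k : K))⁻¹ • Q ((fderivF K ^ k) p)
        = ∑ k ∈ Finset.range N, (y ^ k / (Ffact k : K)) • Q ((fderivF K ^ k) p) := by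
          refine Finset.sum_congr rfl fun k _ => ?_
          rw [div_eq_mul_inv, mul_smul]
      _ = ∑ k ∈ Finset.range N, (y ^ k / (Ffact k : K)) • ((fderivF K ^ k) (Q p)) := h
      _ = ∑ k ∈ Finset.range N, y ^ k • ((Ffact k : K))⁻¹ • ((fderivF K ^ k) (Q p)) := by
          refine Finset.sum_congr rfl fun k _ => ?_
          rw [div_eq_mul_inv, mul_smul]
  have h1 := key 1 (by omega)
  rw [Ffact_one] at h1
  simpa using h1

lemma natDegree_fderivF_exact (p : Polynomial K) (m : ℕ) (h : p.natDegree = m + 1) :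
    (fderivF K p).natDegree = m ∧ (fderivF K p).coeff m ≠ 0 := by
  have hp0 : p ≠ 0 := fun h0 => by simp [h0] at h
  have hlc : p.coeff (m + 1) ≠ 0 := by
    rw [← h]; exact Polynomial.leadingCoeff_ne_zero.mpr hp0
  have hm : (fderivF K p).coeff m ≠ 0 := by
    rw [coeff_fderivF]
    exact mul_ne_zero (fibK_ne_zero (by omega)) hlc
  refine ⟨le_antisymm ?_ (Polynomial.le_natDegree_of_ne_zero hm), hm⟩
  rw [Polynomial.natDegree_le_iff_coeff_eq_zero]
  intro j hj
  exact coeff_fderivF_eq_zero p j (by omega)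

lemma lift_deg (q : Polynomial K) (m : ℕ)
    (h1 : (fderivF K q).natDegree = m) (h2 : (fderivF K q).coeff m ≠ 0) :
    q.natDegree = m + 1 ∧ q.coeff (m + 1) ≠ 0 := by
  have hc : q.coeff (m + 1) ≠ 0 := fun h0 => h2 (by rw [coeff_fderivF, h0, mul_zero])
  refine ⟨le_antisymm ?_ (Polynomial.le_natDegree_of_ne_zero hc), hc⟩
  rw [Polynomial.natDegree_le_iff_coeff_eq_zero]
  intro j hj
  obtain ⟨i, rfl⟩ : ∃ i, j = i + 1 := ⟨j - 1, by omega⟩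
  have h3 : (fderivF K q).coeff i = 0 :=
    Polynomial.coeff_eq_zero_of_natDegree_lt (by omega)
  rw [coeff_fderivF] at h3
  rcases mul_eq_zero.mp h3 with h4 | h4
  · exact absurd h4 (fibK_ne_zero (by omega))
  · exact h4

lemma Q_natDegree (Q : Module.End K (Polynomial K)) (hQ : DeltaOp K Q) :
    ∀ (d : ℕ) (p : Polynomial K), p.natDegree = d → 1 ≤ d →
      (Q p).natDegree = d - 1 ∧ (Q p).coeff (d - 1) ≠ 0 := by
  obtain ⟨c, hc, hX⟩ := hQ.2
  intro d
  induction d with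
  | zero => intro p _ h; omega
  | succ d ih =>
    intro p hp _
    by_cases hd : d = 0
    · subst hd
      have hp0 : p ≠ 0 := fun h0 => by simp [h0] at hp
      have hco : p.coeff 1 ≠ 0 := by
        rw [show (1 : ℕ) = p.natDegree from hp.symm]
        exact Polynomial.leadingCoeff_ne_zero.mpr hp0
      have hrep : p = p.coeff 1 • Polynomial.X + Polynomial.C (p.coeff 0) := by
        rw [Polynomial.smul_eq_C_mul]
        exact Polynomial.eq_X_add_C_of_natDegree_le_one (le_of_eq hp)
      have hQp : Q p = Polynomial.C (p.coeff 1 * c) := by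
        conv_lhs => rw [hrep]
        rw [map_add, map_smul, hX, Q_C_eq_zero Q hQ, add_zero, Polynomial.smul_C,
          smul_eq_mul]
      constructor
      · rw [hQp, Polynomial.natDegree_C]
      · rw [hQp]; simpa using mul_ne_zero hco hc
    · have hD := natDegree_fderivF_exact p d hp
      obtain ⟨hI1, hI2⟩ := ih (fderivF K p) hD.1 (by omega)
      rw [Q_comm_fderivF Q hQ p] at hI1 hI2
      have hL := lift_deg (Q p) (d - 1) hI1 hI2
      have hdd : d - 1 + 1 = d := by omega
      rw [hdd] at hL
      simpa using hL

lemma Q_surj (Q : Module.End K (Polynomial K)) (hQ : DeltaOp K Q) :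
    ∀ (n : ℕ) (r : Polynomial K), r.degree < (n : WithBot ℕ) →
      ∃ p : Polynomial K, Q p = r ∧ p.eval 0 = 0 := by
  intro n
  induction n with
  | zero =>
    intro r hr
    have hr0 : r = 0 := by
      rw [← Polynomial.degree_eq_bot]
      exact Nat.WithBot.lt_zero_iff.mp (by exact_mod_cast hr)
    exact ⟨0, by simp [hr0]⟩
  | succ n ih =>
    intro r hr
    by_cases h0 : r.degree < (n : WithBot ℕ)
    · exact ih r h0
    · have hr0 : r ≠ 0 := by
        intro h
        rw [h, Polynomial.degree_zero] at h0
        exact h0 (WithBot.bot_lt_coe n)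
      have hnd : r.natDegree ≤ n := by
        have := (Polynomial.natDegree_lt_iff_degree_lt (n := n + 1) hr0).mpr
          (by exact_mod_cast hr)
        omega
      set s := Q (Polynomial.X ^ (n + 1)) with hs
      obtain ⟨hs1, hs2⟩ := Q_natDegree Q hQ (n + 1) (Polynomial.X ^ (n + 1))
        (Polynomial.natDegree_X_pow _) (by omega)
      simp only [Nat.add_sub_cancel] at hs1 hs2
      rw [← hs] at hs1 hs2
      set a := r.coeff n / s.coeff n with ha
      have hr' : (r - a • s).degree < (n : WithBot ℕ) := by
        rw [Polynomial.degree_lt_iff_coeff_zero]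
        intro m hm
        rcases eq_or_lt_of_le hm with rfl | hlt
        · rw [Polynomial.coeff_sub, Polynomial.coeff_smul, smul_eq_mul, ha,
            div_mul_cancel₀ _ hs2, sub_self]
        · rw [Polynomial.coeff_sub, Polynomial.coeff_smul, smul_eq_mul,
            Polynomial.coeff_eq_zero_of_natDegree_lt (by omega),
            Polynomial.coeff_eq_zero_of_natDegree_lt (by omega), mul_zero, sub_self]
      obtain ⟨p', hp1, hp2⟩ := ih _ hr'
      refine ⟨p' + a • Polynomial.X ^ (n + 1), ?_, ?_⟩
      · rw [map_add, map_smul, hp1, ← hs, sub_add_cancel]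
      · simp [hp2]

end AuxLemmas

/-- every `∂_F`-delta operator has a uniquely determined `∂_F`-basic
polynomial sequence. -/
theorem basicSeq_exists_unique (Q : Module.End K (Polynomial K)) (hQ : DeltaOp K Q) :
    ∃! q : ℕ → Polynomial K, BasicSeq K Q q := by
  classical
  have hsur : ∀ r : Polynomial K, ∃ p : Polynomial K, Q p = r ∧ p.eval 0 = 0 := by
    intro r
    exact Q_surj Q hQ (r.natDegree + 1) r
      (lt_of_le_of_lt (Polynomial.degree_le_natDegree) (by exact_mod_cast Nat.lt_succ_self _))
  choose g hg1 hg2 using hsur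
  let q : ℕ → Polynomial K := fun n =>
    Nat.rec (1 : Polynomial K) (fun m qm => g ((Nat.fib (m + 1) : K) • qm)) n
  have hq0 : q 0 = 1 := rfl
  have hQq : ∀ m, Q (q (m + 1)) = (Nat.fib (m + 1) : K) • q m := fun m => hg1 _
  have heval : ∀ m, (q (m + 1)).eval 0 = 0 := fun m => hg2 _
  have hdeg : ∀ n, (q n).natDegree = n ∧ q n ≠ 0 := by
    intro n
    induction n with
    | zero => exact ⟨by simp [hq0], by simp [hq0]⟩
    | succ n ih =>
      have hfib : (Nat.fib (n + 1) : K) ≠ 0 := fibK_ne_zero (by omega)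
      have hne : Q (q (n + 1)) ≠ 0 := by
        rw [hQq]; exact smul_ne_zero hfib ih.2
      have hq1 : 1 ≤ (q (n + 1)).natDegree := by
        by_contra h
        push_neg at h
        have hC := Polynomial.eq_C_of_natDegree_eq_zero (p := q (n + 1)) (by omega)
        exact hne (by rw [hC, Q_C_eq_zero Q hQ])
      obtain ⟨hA, _⟩ := Q_natDegree Q hQ ((q (n + 1)).natDegree) (q (n + 1)) rfl hq1
      have hnd : (Q (q (n + 1))).natDegree = n := by
        rw [hQq, Polynomial.smul_eq_C_mul, Polynomial.natDegree_C_mul hfib, ih.1]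
      refine ⟨by omega, fun h => hne (by rw [h, map_zero])⟩
  have hB : BasicSeq K Q q := by
    refine ⟨?_, hq0, ?_, ?_⟩
    · intro n
      rw [Polynomial.degree_eq_natDegree (hdeg n).2, (hdeg n).1]
    · intro n hn
      obtain ⟨m, rfl⟩ : ∃ m, n = m + 1 := ⟨n - 1, by omega⟩
      exact heval m
    · intro n hn
      obtain ⟨m, rfl⟩ : ∃ m, n = m + 1 := ⟨n - 1, by omega⟩
      exact hQq m
  refine ⟨q, hB, ?_⟩
  intro q' hq'
  obtain ⟨hd', h0', he', hQ'⟩ := hq'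
  funext n
  induction n with
  | zero => rw [h0', hq0]
  | succ n ih =>
    have hz : Q (q' (n + 1) - q (n + 1)) = 0 := by
      rw [map_sub, hQ' (n + 1) (by omega), hQq]
      simp only [Nat.add_sub_cancel, ih, sub_self]
    have hnd0 : (q' (n + 1) - q (n + 1)).natDegree = 0 := by
      by_contra h
      obtain ⟨_, hcne⟩ := Q_natDegree Q hQ _ (q' (n + 1) - q (n + 1)) rfl (by omega)
      rw [hz] at hcne
      simp at hcne
    have hev : (q' (n + 1) - q (n + 1)).eval 0 = 0 := by
      rw [Polynomial.eval_sub, he' (n + 1) (by omega), heval n, sub_zero]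
    have hzero : q' (n + 1) - q (n + 1) = 0 := by
      have hC := Polynomial.eq_C_of_natDegree_eq_zero hnd0
      rw [hC] at hev ⊢
      simp only [Polynomial.eval_C] at hev
      rw [hev, Polynomial.C_0]
    exact sub_eq_zero.mp hzero
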